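/- Let K be a commutative semiring, Σ a finite set, D = (S, Σ, α, δ, Ω_D, K) a deterministic automaton with outputs in K, and 𝒜 = (M, KΣ*, s_𝒜, t, Ω_𝒜) a K-linear automaton over the free K-algebra KΣ*. Then restriction to basis vectors, φ ↦ (s ↦ φ(e_s)), is a bijection between the set of K-linear automaton morphisms from the free K-linear automaton F(D) to 𝒜 and the set of deterministic automaton morphisms from D to the determinization U(𝒜); its inverse sends f : S → M to its unique K-linear extension K^(S) → M. (This bijection is the adjunction between the category of deterministic automata and the category of K-linear automata.) -/

import Mathlib

/-! Since `S →₀ K` is free on the basis vectors `e_s`, a linear map out of it is the same as a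
function on `S` (`Finsupp.lift`), and two linear maps out of it agree as soon as they agree on
basis vectors. Each of the three conditions on a linear automaton morphism `φ` is an equality of
linear maps out of `S →₀ K`, so it holds iff it holds on basis vectors, where it becomes the
corresponding condition on the restriction `s ↦ φ e_s`. The adjunction is therefore `Finsupp.lift`
restricted to morphisms. -/

namespace Finsupp

variable {K S M : Type*} [CommSemiring K] [AddCommMonoid M] [Module K M]

theorem forall_apply_eq_iff_forall_single {φ ψ : (S →₀ K) →ₗ[K] M} :
    (∀ m, φ m = ψ m) ↔ ∀ s, φ (single s 1) = ψ (single s 1) :=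
  ⟨fun h _ => h _, fun h => LinearMap.ext_iff.mp (lhom_ext' fun s => LinearMap.ext_ring (h s))⟩

theorem forall_map_lmapDomain_iff_forall_single (φ : (S →₀ K) →ₗ[K] M) (g : S → S)
    (T : Module.End K M) :
    (∀ m, φ (lmapDomain K K g m) = T (φ m)) ↔ ∀ s, φ (single (g s) 1) = T (φ (single s 1)) := by
  simpa only [LinearMap.comp_apply, lmapDomain_apply, mapDomain_single] using
    forall_apply_eq_iff_forall_single (φ := φ ∘ₗ lmapDomain K K g) (ψ := T ∘ₗ φ)

theorem forall_comp_eq_linearCombination_iff_forall_single (φ : (S →₀ K) →ₗ[K] M)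
    (Ω : M →ₗ[K] K) (ΩS : S → K) :
    (∀ m, Ω (φ m) = linearCombination K ΩS m) ↔ ∀ s, Ω (φ (single s 1)) = ΩS s := by
  simpa only [LinearMap.comp_apply, linearCombination_single, smul_eq_mul, one_mul] using
    forall_apply_eq_iff_forall_single (φ := Ω ∘ₗ φ) (ψ := linearCombination K ΩS)

end Finsupp

section Automaton

variable {K S M σ : Type*} [CommSemiring K] [AddCommMonoid M] [Module K M]

/-- `φ` is a morphism from the free linear automaton on `(S, α, δ, ΩD)` to `(M, sA, t, ΩA)`. -/
def IsLinearAutomatonHom (α : S) (δ : σ → S → S) (ΩD : S → K) (t : σ → Module.End K M)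
    (sA : M) (ΩA : M →ₗ[K] K) (φ : (S →₀ K) →ₗ[K] M) : Prop :=
  φ (Finsupp.single α 1) = sA ∧
    (∀ x m, φ (Finsupp.lmapDomain K K (δ x) m) = t x (φ m)) ∧
    ∀ m, ΩA (φ m) = Finsupp.linearCombination K ΩD m

/-- `f` is a morphism from `(S, α, δ, ΩD)` to the determinization of `(M, sA, t, ΩA)`. -/
def IsDetAutomatonHom (α : S) (δ : σ → S → S) (ΩD : S → K) (t : σ → Module.End K M)
    (sA : M) (ΩA : M →ₗ[K] K) (f : S → M) : Prop :=
  f α = sA ∧ (∀ x s, f (δ x s) = t x (f s)) ∧ ∀ s, ΩA (f s) = ΩD s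

theorem isLinearAutomatonHom_iff_isDetAutomatonHom (α : S) (δ : σ → S → S) (ΩD : S → K)
    (t : σ → Module.End K M) (sA : M) (ΩA : M →ₗ[K] K) (φ : (S →₀ K) →ₗ[K] M) :
    IsLinearAutomatonHom α δ ΩD t sA ΩA φ ↔
      IsDetAutomatonHom α δ ΩD t sA ΩA ((Finsupp.lift M K S).symm φ) := by
  simp only [IsLinearAutomatonHom, IsDetAutomatonHom, Finsupp.lift_symm_apply,
    Finsupp.forall_map_lmapDomain_iff_forall_single,
    Finsupp.forall_comp_eq_linearCombination_iff_forall_single]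

end Automaton

theorem automaton_adjunction_general {K : Type*} [CommSemiring K]
    {σ : Type*} {S M : Type*} [AddCommMonoid M] [Module K M]
    (α : S) (δ : σ → S → S) (ΩD : S → K)
    (t : σ → Module.End K M) (sA : M) (ΩA : M →ₗ[K] K) :
    ∃ e : {φ : (S →₀ K) →ₗ[K] M //
            φ (Finsupp.single α 1) = sA ∧
            (∀ (x : σ) (m : S →₀ K), φ (Finsupp.lmapDomain K K (δ x) m) = t x (φ m)) ∧
            (∀ m : S →₀ K, ΩA (φ m) = Finsupp.linearCombination K ΩD m)} ≃
          {f : S → M //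
            f α = sA ∧
            (∀ (x : σ) (s : S), f (δ x s) = t x (f s)) ∧
            (∀ s : S, ΩA (f s) = ΩD s)},
      (∀ φ, (e φ : S → M) = fun s => (φ : (S →₀ K) →ₗ[K] M) (Finsupp.single s 1)) ∧
      (∀ f, (e.symm f : (S →₀ K) →ₗ[K] M) = Finsupp.linearCombination K (f : S → M)) :=
  ⟨(Finsupp.lift M K S).symm.toEquiv.subtypeEquiv
      (isLinearAutomatonHom_iff_isDetAutomatonHom α δ ΩD t sA ΩA),
    fun _ => rfl, fun _ => rfl⟩

/-- Let `K` be a commutative semiring, `Σ` a finite set,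
`D = (S, Σ, α, δ, Ω_D, K)` a deterministic automaton with outputs in `K`, and
`𝒜 = (M, KΣ*, s_𝒜, t, Ω_𝒜)` a `K`-linear automaton over the free `K`-algebra `KΣ*` with
action generated by the endomorphisms `t x`.  Restriction to basis vectors,
`φ ↦ (s ↦ φ (e_s))`, is a bijection between the `K`-linear automaton morphisms from the free
`K`-linear automaton `F(D)` (state semimodule `S →₀ K`, action generated by
`T x = lmapDomain (δ x)`, start `e_α`, observation the linear extension of `Ω_D`) to `𝒜`, and
the deterministic automaton morphisms from `D` to the determinization `U(𝒜)`; the inverse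
sends `f : S → M` to its unique `K`-linear extension `linearCombination K f`.  (This bijection
is the adjunction between deterministic automata and `K`-linear automata.) -/
theorem automaton_adjunction {K : Type*} [CommSemiring K]
    {σ : Type*} [Fintype σ] {S M : Type*} [AddCommMonoid M] [Module K M]
    (α : S) (δ : σ → S → S) (ΩD : S → K)
    (t : σ → Module.End K M) (sA : M) (ΩA : M →ₗ[K] K) :
    ∃ e : {φ : (S →₀ K) →ₗ[K] M //
            φ (Finsupp.single α 1) = sA ∧
            (∀ (x : σ) (m : S →₀ K), φ (Finsupp.lmapDomain K K (δ x) m) = t x (φ m)) ∧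
            (∀ m : S →₀ K, ΩA (φ m) = Finsupp.linearCombination K ΩD m)} ≃
          {f : S → M //
            f α = sA ∧
            (∀ (x : σ) (s : S), f (δ x s) = t x (f s)) ∧
            (∀ s : S, ΩA (f s) = ΩD s)},
      (∀ φ, (e φ : S → M) = fun s => (φ : (S →₀ K) →ₗ[K] M) (Finsupp.single s 1)) ∧
      (∀ f, (e.symm f : (S →₀ K) →ₗ[K] M) = Finsupp.linearCombination K (f : S → M)) :=
  automaton_adjunction_general α δ ΩD t sA ΩA
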